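/- arXiv:1504.00183 — 4 statements merged into one kernel-verified Lean document; each statement's English description precedes it below -/
import Mathlib

section
/- For the 3×3 symmetric matrix M = [[k₁C/Re, k₁/2, 0], [k₁/2, k₂C/Re, 0], [0, 0, k₂C/Re]] with positive reals k₁, k₂, C, Re, the matrix M is positive semidefinite if and only if k₂/k₁ ≥ (Re/(2C))². -/
/-!
Splitting off the first coordinate, the matrix is `[a bᵀ; b D]` with `a = k₁C/Re > 0`, so it is
positive semidefinite iff its Schur complement `D - a⁻¹ b bᵀ` is. Here that complement is
diagonal with entries `k₂C/Re - k₁Re/(4C)` and `k₂C/Re`, and the first one is nonnegative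
exactly when `k₂/k₁ ≥ (Re/(2C))²`.
-/

namespace Matrix

lemma posSemidef_fromBlocks_scalar_iff {m n : Type*} [DecidableEq m] [Unique m] [Fintype n]
    {a : ℝ} (ha : 0 < a) (b : n → ℝ) (D : Matrix n n ℝ) :
    (fromBlocks (diagonal fun _ : m => a) (replicateRow m b) (replicateCol m b) D).PosSemidef ↔
      (D - a⁻¹ • vecMulVec b b).PosSemidef := by
  have hA : (diagonal fun _ : m => a).PosDef := .diagonal fun _ => ha
  let := hA.isUnit.invertible
  have schur := PosDef.fromBlocks₁₁ (replicateRow m b) D hA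
  rw [conjTranspose_replicateRow, star_trivial] at schur
  rw [schur]
  congr! 2
  ext i j
  simp [mul_apply, vecMulVec_apply]
  ring

lemma posSemidef_fin_three_blockDiagonal_iff {a : ℝ} (ha : 0 < a) (b c d : ℝ) :
    (!![a, b, 0; b, c, 0; 0, 0, d] : Matrix (Fin 3) (Fin 3) ℝ).PosSemidef ↔
      b ^ 2 / a ≤ c ∧ 0 ≤ d := by
  have blocks : (!![a, b, 0; b, c, 0; 0, 0, d] : Matrix (Fin 3) (Fin 3) ℝ).submatrix
      finSumFinEquiv finSumFinEquiv = fromBlocks (diagonal fun _ : Fin 1 => a)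
        (replicateRow (Fin 1) ![b, 0]) (replicateCol (Fin 1) ![b, 0]) (diagonal ![c, d]) := by
    ext (i | i) (j | j) <;> fin_cases i <;> fin_cases j <;> rfl
  have complement : diagonal ![c, d] - a⁻¹ • vecMulVec ![b, 0] ![b, 0] =
      diagonal ![c - b ^ 2 / a, d] := by
    ext i j
    fin_cases i <;> fin_cases j <;> simp [div_eq_inv_mul, sq]
  rw [← posSemidef_submatrix_equiv (finSumFinEquiv (m := 1) (n := 2)), blocks,
    posSemidef_fromBlocks_scalar_iff ha, complement, posSemidef_diagonal_iff, Fin.forall_fin_two]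
  simp

end Matrix

theorem stmt_0_general (k₁ k₂ C Re : ℝ) (hk₁ : 0 < k₁) (hC : 0 < C) (hRe : 0 < Re) :
    (Matrix.PosSemidef
      (!![k₁ * C / Re, k₁ / 2, 0;
          k₁ / 2, k₂ * C / Re, 0;
          0, 0, k₂ * C / Re] : Matrix (Fin 3) (Fin 3) ℝ)) ↔
    k₂ / k₁ ≥ (Re / (2 * C)) ^ 2 := by
  rw [Matrix.posSemidef_fin_three_blockDiagonal_iff (by positivity), ge_iff_le,
    le_div_iff₀ hk₁]
  have schur_term : (k₁ / 2) ^ 2 / (k₁ * C / Re) = (Re / (2 * C)) ^ 2 * k₁ * (C / Re) := by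
    field_simp
  rw [schur_term, mul_div_assoc, mul_le_mul_iff_left₀ (by positivity)]
  refine ⟨And.left, fun h => ⟨h, ?_⟩⟩
  have hk₂ : 0 ≤ k₂ := (mul_nonneg (sq_nonneg _) hk₁.le).trans h
  positivity

theorem stmt_0 (k₁ k₂ C Re : ℝ) (hk₁ : 0 < k₁) (hk₂ : 0 < k₂) (hC : 0 < C) (hRe : 0 < Re) :
    (Matrix.PosSemidef
      (!![k₁ * C / Re, k₁ / 2, 0;
          k₁ / 2, k₂ * C / Re, 0;
          0, 0, k₂ * C / Re] : Matrix (Fin 3) (Fin 3) ℝ)) ↔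
    k₂ / k₁ ≥ (Re / (2 * C)) ^ 2 :=
  stmt_0_general k₁ k₂ C Re hk₁ hC hRe
end

section
/- Let Ro ∈ (0,1), C > 0, and Re > 0. There exist k₁, k₂ > 0 with (k₂·Ro − k₁(Ro−1))² ≤ 4 k₁ k₂ C²/Re² if and only if Re ≤ C / √(Ro(1−Ro)). Hence the supremum of Reynolds numbers admitting a diagonal weighted-energy stability certificate equals C/√(Ro(1−Ro)). -/
theorem stmt_3 (Ro C Re : ℝ) (hRo : Ro ∈ Set.Ioo (0:ℝ) 1) (hC : 0 < C) (hRe : 0 < Re) :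
    (∃ k₁ k₂ : ℝ, 0 < k₁ ∧ 0 < k₂ ∧
      (k₂ * Ro - k₁ * (Ro - 1)) ^ 2 ≤ 4 * k₁ * k₂ * C ^ 2 / Re ^ 2) ↔
    Re ≤ C / Real.sqrt (Ro * (1 - Ro)) := by
  obtain ⟨h0, h1⟩ := hRo
  have hb : (0:ℝ) < 1 - Ro := by linarith
  have hab : 0 < Ro * (1 - Ro) := mul_pos h0 hb
  have hs : 0 < Real.sqrt (Ro * (1 - Ro)) := Real.sqrt_pos.mpr hab
  have hsq : Real.sqrt (Ro * (1 - Ro)) ^ 2 = Ro * (1 - Ro) := Real.sq_sqrt hab.le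
  have hRe2 : (0:ℝ) < Re ^ 2 := by positivity
  constructor
  · rintro ⟨k₁, k₂, hk₁, hk₂, h⟩
    have h' : (k₂ * Ro - k₁ * (Ro - 1)) ^ 2 * Re ^ 2 ≤ 4 * k₁ * k₂ * C ^ 2 :=
      (le_div_iff₀ hRe2).mp h
    have key : Ro * (1 - Ro) * Re ^ 2 ≤ C ^ 2 := by
      nlinarith [sq_nonneg (k₂ * Ro - k₁ * (1 - Ro)), mul_pos hk₁ hk₂, sq_nonneg Re,
        mul_pos (mul_pos hk₁ hk₂) hRe2]
    rw [le_div_iff₀ hs]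
    nlinarith [Real.sqrt_nonneg (Ro * (1 - Ro)), hC, hsq]
  · intro h
    refine ⟨Ro, 1 - Ro, h0, hb, ?_⟩
    have h' : Re * Real.sqrt (Ro * (1 - Ro)) ≤ C := (le_div_iff₀ hs).mp h
    have h2 : Ro * (1 - Ro) * Re ^ 2 ≤ C ^ 2 := by
      nlinarith [hsq, mul_le_mul h' h' (by positivity) hC.le]
    rw [le_div_iff₀ hRe2]
    nlinarith [hab]
end

section
/- Let S : [0,∞) → ℝ≥0 be differentiable, u : [0,∞) → ℝ≥0, and β₁, β₂ : ℝ≥0 → ℝ≥0 strictly increasing continuous with β₁(0) = β₂(0) = 0 and β₁ surjective onto ℝ≥0, such that β₁(u(t)) ≤ S(t) ≤ β₂(u(t)) for all t. If S'(t) ≤ −ψ S(t) + w(t) with ψ > 0 and w ≥ 0 continuous, then u(t) ≤ β₁⁻¹( 2 e^{−ψt} β₂(u(0)) ) + β₁⁻¹( (2/ψ) sup_{τ∈[0,t]} w(τ) ) for all t ≥ 0. -/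
open Set Real

/-! The storage function obeys the linear comparison estimate
`S t ≤ e^{-ψ t} S 0 + (1/ψ) sup_{[0,t]} w` (Grönwall with negative rate), and the sandwich
bounds turn this into `β₁ (u t) ≤ e^{-ψ t} β₂ (u 0) + (1/ψ) sup w`. Applying the monotone
inverse of `β₁` and splitting `β₁⁻¹ (a + b) ≤ β₁⁻¹ (2a) + β₁⁻¹ (2b)` according to which of
`a`, `b` is larger gives the estimate. -/

theorem le_exp_mul_add_div_of_deriv_le {f f' : ℝ → ℝ} {ψ M t : ℝ} (hψ : 0 < ψ) (hM : 0 ≤ M)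
    (ht : 0 ≤ t) (hf : ∀ s ∈ Icc 0 t, HasDerivAt f (f' s) s)
    (bound : ∀ s ∈ Ico 0 t, f' s ≤ -ψ * f s + M) :
    f t ≤ exp (-ψ * t) * f 0 + M / ψ := by
  have hgronwall : f t ≤ gronwallBound (f 0) (-ψ) M (t - 0) :=
    le_gronwallBound_of_liminf_deriv_right_le
      (fun s hs => (hf s hs).continuousAt.continuousWithinAt)
      (fun s hs _ hr => (hf s (Ico_subset_Icc_self hs)).hasDerivWithinAt.liminf_right_slope_le hr)
      le_rfl bound t ⟨ht, le_rfl⟩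
  rw [sub_zero, gronwallBound_of_K_ne_0 (neg_ne_zero.2 hψ.ne')] at hgronwall
  have hdecay : M / -ψ * (exp (-ψ * t) - 1) ≤ M / ψ := by
    rw [div_neg, neg_mul, ← mul_neg, neg_sub]
    exact mul_le_of_le_one_right (div_nonneg hM hψ.le) (sub_le_self _ (exp_pos _).le)
  linarith

theorem StrictMonoOn.le_rightInv_of_map_le {f g : ℝ → ℝ} (hf : StrictMonoOn f (Ici 0))
    (hfg : ∀ y, 0 ≤ y → f (g y) = y ∧ 0 ≤ g y) {x y : ℝ} (hx : 0 ≤ x) (hy : 0 ≤ y)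
    (h : f x ≤ y) : x ≤ g y := by
  by_contra! hlt
  have := hf (mem_Ici.2 (hfg y hy).2) (mem_Ici.2 hx) hlt
  rw [(hfg y hy).1] at this
  linarith

theorem StrictMonoOn.monotoneOn_rightInv {f g : ℝ → ℝ} (hf : StrictMonoOn f (Ici 0))
    (hfg : ∀ y, 0 ≤ y → f (g y) = y ∧ 0 ≤ g y) : MonotoneOn g (Ici 0) :=
  fun y₁ hy₁ _ hy₂ h =>
    hf.le_rightInv_of_map_le hfg (hfg y₁ hy₁).2 hy₂ ((hfg y₁ hy₁).1.trans_le h)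

theorem MonotoneOn.map_add_le_map_two_mul_add {g : ℝ → ℝ} (hg : MonotoneOn g (Ici 0))
    (hg₀ : ∀ y, 0 ≤ y → 0 ≤ g y) {a b : ℝ} (ha : 0 ≤ a) (hb : 0 ≤ b) :
    g (a + b) ≤ g (2 * a) + g (2 * b) := by
  have hab : a + b ∈ Ici 0 := mem_Ici.2 (add_nonneg ha hb)
  rcases le_total a b with h | h
  · have := hg hab (mem_Ici.2 (by linarith)) (by linarith : a + b ≤ 2 * b)
    linarith [hg₀ (2 * a) (by linarith)]
  · have := hg hab (mem_Ici.2 (by linarith)) (by linarith : a + b ≤ 2 * a)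
    linarith [hg₀ (2 * b) (by linarith)]

theorem stmt_6_general (S S' u w β₁ β₂ β₁inv : ℝ → ℝ) (ψ : ℝ) (hψ : 0 < ψ)
    (hβ₁mono : StrictMonoOn β₁ (Set.Ici 0))
    (hβ₂nn : ∀ x, 0 ≤ x → 0 ≤ β₂ x)
    (hinvr : ∀ y, 0 ≤ y → β₁ (β₁inv y) = y ∧ 0 ≤ β₁inv y)
    (hS : ∀ t, 0 ≤ t → HasDerivAt S (S' t) t)
    (hunn : ∀ t, 0 ≤ t → 0 ≤ u t)
    (hsand : ∀ t, 0 ≤ t → β₁ (u t) ≤ S t ∧ S t ≤ β₂ (u t))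
    (hw : Continuous w) (hwnn : ∀ t, 0 ≤ t → 0 ≤ w t)
    (hdiss : ∀ t, 0 ≤ t → S' t ≤ -ψ * S t + w t) :
    ∀ t, 0 ≤ t →
      u t ≤ β₁inv (2 * (Real.exp (-ψ * t) * β₂ (u 0)))
            + β₁inv ((2 / ψ) * sSup (w '' Set.Icc 0 t)) := by
  intro t ht
  set M := sSup (w '' Icc 0 t)
  have hw_le : ∀ s ∈ Icc 0 t, w s ≤ M := fun s hs => hw.continuousOn.le_sSup_image_Icc hs
  have hM : 0 ≤ M := (hwnn 0 le_rfl).trans (hw_le 0 ⟨le_rfl, ht⟩)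
  have hS_t : S t ≤ exp (-ψ * t) * S 0 + M / ψ :=
    le_exp_mul_add_div_of_deriv_le hψ hM ht (fun s hs => hS s hs.1)
      fun s hs => (hdiss s hs.1).trans (by linarith [hw_le s (Ico_subset_Icc_self hs)])
  set A := exp (-ψ * t) * β₂ (u 0)
  have hA : 0 ≤ A := mul_nonneg (exp_pos _).le (hβ₂nn _ (hunn 0 le_rfl))
  have hβ₁u : β₁ (u t) ≤ A + M / ψ := calc
    β₁ (u t) ≤ S t := (hsand t ht).1
    _ ≤ exp (-ψ * t) * S 0 + M / ψ := hS_t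
    _ ≤ A + M / ψ :=
      add_le_add_left (mul_le_mul_of_nonneg_left (hsand 0 le_rfl).2 (exp_pos _).le) _
  have hB : 0 ≤ M / ψ := div_nonneg hM hψ.le
  calc u t ≤ β₁inv (A + M / ψ) :=
        hβ₁mono.le_rightInv_of_map_le hinvr (hunn t ht) (add_nonneg hA hB) hβ₁u
    _ ≤ β₁inv (2 * A) + β₁inv (2 * (M / ψ)) :=
        (hβ₁mono.monotoneOn_rightInv hinvr).map_add_le_map_two_mul_add
          (fun y hy => (hinvr y hy).2) hA hB
    _ = β₁inv (2 * A) + β₁inv (2 / ψ * M) := by congr 2; ring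

theorem stmt_6 (S S' u w β₁ β₂ β₁inv : ℝ → ℝ) (ψ : ℝ) (hψ : 0 < ψ)
    (hβ₁mono : StrictMonoOn β₁ (Set.Ici 0)) (hβ₂mono : StrictMonoOn β₂ (Set.Ici 0))
    (hβ₁cont : ContinuousOn β₁ (Set.Ici 0)) (hβ₂cont : ContinuousOn β₂ (Set.Ici 0))
    (hβ₁0 : β₁ 0 = 0) (hβ₂0 : β₂ 0 = 0)
    (hβ₁surj : Set.SurjOn β₁ (Set.Ici 0) (Set.Ici 0))
    (hβ₁nn : ∀ x, 0 ≤ x → 0 ≤ β₁ x) (hβ₂nn : ∀ x, 0 ≤ x → 0 ≤ β₂ x)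
    (hinvl : ∀ x, 0 ≤ x → β₁inv (β₁ x) = x)
    (hinvr : ∀ y, 0 ≤ y → β₁ (β₁inv y) = y ∧ 0 ≤ β₁inv y)
    (hS : ∀ t, 0 ≤ t → HasDerivAt S (S' t) t)
    (hSnn : ∀ t, 0 ≤ t → 0 ≤ S t)
    (hunn : ∀ t, 0 ≤ t → 0 ≤ u t)
    (hsand : ∀ t, 0 ≤ t → β₁ (u t) ≤ S t ∧ S t ≤ β₂ (u t))
    (hw : Continuous w) (hwnn : ∀ t, 0 ≤ t → 0 ≤ w t)
    (hdiss : ∀ t, 0 ≤ t → S' t ≤ -ψ * S t + w t) :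
    ∀ t, 0 ≤ t →
      u t ≤ β₁inv (2 * (Real.exp (-ψ * t) * β₂ (u 0)))
            + β₁inv ((2 / ψ) * sSup (w '' Set.Icc 0 t)) :=
  stmt_6_general S S' u w β₁ β₂ β₁inv ψ hψ hβ₁mono hβ₂nn hinvr hS hunn hsand hw hwnn hdiss
end

section
/- Let C > 0, Re > 0, Ro ∈ (0,1) with Re > C/√(Ro(1−Ro)). Then for all k₁, k₂ > 0 there exists a vector z ∈ ℝ³ with zᵀ M z < 0, where M = [[k₁C/Re, (k₂Ro − k₁(Ro−1))/2, 0], [(k₂Ro − k₁(Ro−1))/2, k₂C/Re, 0], [0, 0, k₂C/Re]]. -/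
/-!
The upper-left 2×2 block `[[a, b], [b, d]]` of `M` has determinant `a d - b²`, and for `d > 0`
the vector `(d, -b, 0)` evaluates the form to `d (a d - b²)`. Above the threshold,
`a d = k₁ k₂ (C/Re)² < k₁ k₂ Ro (1 - Ro)`, while AM–GM gives
`4 k₁ k₂ Ro (1 - Ro) ≤ (k₂ Ro + k₁ (1 - Ro))² = 4 b²`; so the determinant is negative.
-/

open Matrix

theorem dotProduct_mulVec_blockDiag_eq (a b d e : ℝ) :
    ![d, -b, 0] ⬝ᵥ (!![a, b, 0; b, d, 0; 0, 0, e] : Matrix (Fin 3) (Fin 3) ℝ).mulVec ![d, -b, 0] =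
      d * (a * d - b ^ 2) := by
  simp only [dotProduct, mulVec, of_apply, cons_val', cons_val_fin_one, Fin.sum_univ_three,
    cons_val_zero, cons_val_one, cons_val, mul_zero, add_zero, zero_mul]
  ring

theorem exists_dotProduct_mulVec_neg_of_mul_lt_sq {a b d : ℝ} (e : ℝ) (hd : 0 < d)
    (h : a * d < b ^ 2) :
    ∃ z : Fin 3 → ℝ,
      z ⬝ᵥ (!![a, b, 0; b, d, 0; 0, 0, e] : Matrix (Fin 3) (Fin 3) ℝ).mulVec z < 0 :=
  ⟨![d, -b, 0], by
    rw [dotProduct_mulVec_blockDiag_eq]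
    exact mul_neg_of_pos_of_neg hd (sub_neg.2 h)⟩

theorem div_sq_lt_of_div_sqrt_lt {C Re s : ℝ} (hC : 0 ≤ C) (hs : 0 < s)
    (h : C / Real.sqrt s < Re) : (C / Re) ^ 2 < s := by
  have hsqrt : 0 < Real.sqrt s := Real.sqrt_pos.2 hs
  have hRe : 0 < Re := (div_nonneg hC hsqrt.le).trans_lt h
  have hC_lt : C / Re < Real.sqrt s := by
    rw [div_lt_iff₀ hRe, mul_comm]
    exact (div_lt_iff₀ hsqrt).1 h
  calc (C / Re) ^ 2 < Real.sqrt s ^ 2 := by gcongr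
    _ = s := Real.sq_sqrt hs.le

theorem stmt_19_general (C Re Ro : ℝ) (hC : 0 < C) (hRo : Ro ∈ Set.Ioo (0:ℝ) 1)
    (hthr : Re > C / Real.sqrt (Ro * (1 - Ro))) :
    ∀ k₁ k₂ : ℝ, 0 < k₁ → 0 < k₂ →
      ∃ z : Fin 3 → ℝ,
        z ⬝ᵥ (!![k₁ * C / Re, (k₂ * Ro - k₁ * (Ro - 1)) / 2, 0;
                 (k₂ * Ro - k₁ * (Ro - 1)) / 2, k₂ * C / Re, 0;
                 0, 0, k₂ * C / Re] : Matrix (Fin 3) (Fin 3) ℝ).mulVec z < 0 := by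
  intro k₁ k₂ hk₁ hk₂
  obtain ⟨hRo₀, hRo₁⟩ := hRo
  have hs : 0 < Ro * (1 - Ro) := mul_pos hRo₀ (sub_pos.2 hRo₁)
  have hRe : 0 < Re := (div_pos hC (Real.sqrt_pos.2 hs)).trans hthr
  have hamgm := four_mul_le_sq_add (k₂ * Ro) (k₁ * (1 - Ro))
  refine exists_dotProduct_mulVec_neg_of_mul_lt_sq _ (by positivity) ?_
  calc k₁ * C / Re * (k₂ * C / Re) = k₁ * k₂ * (C / Re) ^ 2 := by ring
    _ < k₁ * k₂ * (Ro * (1 - Ro)) := by gcongr; exact div_sq_lt_of_div_sqrt_lt hC.le hs hthr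
    _ ≤ ((k₂ * Ro - k₁ * (Ro - 1)) / 2) ^ 2 := by linarith

theorem stmt_19 (C Re Ro : ℝ) (hC : 0 < C) (hRe : 0 < Re) (hRo : Ro ∈ Set.Ioo (0:ℝ) 1)
    (hthr : Re > C / Real.sqrt (Ro * (1 - Ro))) :
    ∀ k₁ k₂ : ℝ, 0 < k₁ → 0 < k₂ →
      ∃ z : Fin 3 → ℝ,
        z ⬝ᵥ (!![k₁ * C / Re, (k₂ * Ro - k₁ * (Ro - 1)) / 2, 0;
                 (k₂ * Ro - k₁ * (Ro - 1)) / 2, k₂ * C / Re, 0;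
                 0, 0, k₂ * C / Re] : Matrix (Fin 3) (Fin 3) ℝ).mulVec z < 0 :=
  stmt_19_general C Re Ro hC hRo hthr
end
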